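/- Let $\delta > 0$ be sufficiently small (in particular $\delta < 3^{-1/3}$ and small enough that the stated derivative sign conditions hold). Then the region $R_\delta = \{(q,G,Z) : 0 < q \le \delta^3,\ G \ge \tfrac13 + \delta,\ 0 < Zq \le \delta,\ Z \ge \tfrac{1}{\delta}\}$ is positively invariant for the system $\frac{dq}{d\zeta} = -2GZq$, $\frac{dG}{d\zeta} = 2G[Z(1-G)-(Z^2+1)^{3/2}q^2]$, $\frac{dZ}{d\zeta} = (3G-1-Zq^2\sqrt{Z^2+1})(Z^2+1)$ restricted to $G \le 1$, and any solution starting in $R_\delta$ (with $G\le 1$) has $Z \to \infty$ in finite time. -/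

import Mathlib

/-!
On each boundary piece of `R_δ` the vector field points inward: `q' < 0` everywhere,
`(Zq)' < 0` on `Zq = δ` (the term `-Z q³ Z³ = -δ⁴/q` beats `2q` because `q ≤ δ³`), `G' > 0` on
`G = 1/3 + δ`, and `Z' ≥ δ (Z² + 1) > 0` throughout. Continuous induction then keeps the closed
conditions, while `q > 0` persists because `q' = -2GZ q` is linear in `q`. Inside the region
`Z' ≥ δ Z²`, so `1/Z` decreases at rate `δ` from `1/Z(0) ≤ δ` and would vanish by time `1`.
-/

open Set Filter Topology

/-- `(q, G, Z)` solves the reduced system (R1E2)-(R1E4) on the set `s`. -/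
def EVSol (q G Z : ℝ → ℝ) (s : Set ℝ) : Prop :=
  ∀ ζ ∈ s,
    HasDerivAt q (-(2 * G ζ * Z ζ * q ζ)) ζ ∧
    HasDerivAt G (2 * G ζ * (Z ζ * (1 - G ζ)
        - Real.sqrt ((Z ζ)^2 + 1)^3 * (q ζ)^2)) ζ ∧
    HasDerivAt Z ((3 * G ζ - 1 - Z ζ * (q ζ)^2 * Real.sqrt ((Z ζ)^2 + 1))
        * ((Z ζ)^2 + 1)) ζ

/-- Membership in the region `R_δ`. -/
def InRegion (δ q G Z : ℝ) : Prop :=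
  0 < q ∧ q ≤ δ^3 ∧ 1/3 + δ ≤ G ∧ 0 < Z * q ∧ Z * q ≤ δ ∧ 1/δ ≤ Z

section Barrier

variable {f : ℝ → ℝ} {x d c : ℝ}

lemma eventually_lt_of_hasDerivAt_neg (hf : HasDerivAt f d x) (hd : d < 0) :
    ∀ᶠ t in 𝓝[>] x, f t < f x := by
  have hslope : ∀ᶠ t in 𝓝[>] x, slope f x t < 0 :=
    (hasDerivAt_iff_tendsto_slope.mp hf).eventually_lt_const hd |>.filter_mono
      (nhdsWithin_mono _ fun _ ht => ne_of_gt ht)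
  filter_upwards [hslope, self_mem_nhdsWithin] with t ht hxt
  rwa [slope_neg_iff_of_le (le_of_lt hxt)] at ht

lemma eventually_le_of_hasDerivAt (hf : HasDerivAt f d x) (hx : f x ≤ c)
    (hd : f x = c → d < 0) : ∀ᶠ t in 𝓝[>] x, f t ≤ c := by
  rcases hx.lt_or_eq with hlt | heq
  · exact (hf.continuousAt.eventually (gt_mem_nhds hlt)).filter_mono nhdsWithin_le_nhds
      |>.mono fun _ ht => ht.le
  · filter_upwards [eventually_lt_of_hasDerivAt_neg hf (hd heq)] with t ht
    exact heq ▸ ht.le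

lemma eventually_ge_of_hasDerivAt (hf : HasDerivAt f d x) (hx : c ≤ f x)
    (hd : f x = c → 0 < d) : ∀ᶠ t in 𝓝[>] x, c ≤ f t := by
  have := eventually_le_of_hasDerivAt hf.neg (neg_le_neg hx)
    fun h => neg_neg_of_pos (hd (neg_inj.mp h))
  exact this.mono fun _ ht => neg_le_neg_iff.mp ht

end Barrier

theorem ne_zero_of_hasDerivAt_eq_mul {f a : ℝ → ℝ} {b c : ℝ} (hbc : b ≤ c)
    (ha : ContinuousOn a (Icc b c)) (hf : ∀ t ∈ Icc b c, HasDerivAt f (a t * f t) t)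
    (hb : f b ≠ 0) : f c ≠ 0 := by
  obtain ⟨K, hK⟩ := isCompact_Icc.exists_bound_of_continuousOn ha
  have hderiv : ∀ t ∈ Icc b c, HasDerivAt (fun t => f t ^ 2 * Real.exp (2 * K * t))
      (2 * (a t + K) * f t ^ 2 * Real.exp (2 * K * t)) t := by
    intro t ht
    have hsq : HasDerivAt (fun t => f t ^ 2) (2 * f t * (a t * f t)) t := by
      simpa using (hf t ht).fun_pow 2
    have hexp : HasDerivAt (fun t => Real.exp (2 * K * t)) (Real.exp (2 * K * t) * (2 * K)) t :=
      ((hasDerivAt_id t).const_mul (2 * K)).exp.congr_deriv (by simp)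
    exact (hsq.mul hexp).congr_deriv (by ring)
  -- `(f² e^{2Kt})' = 2 (a + K) f² e^{2Kt} ≥ 0` needs no sign information on `f`.
  have hmono : MonotoneOn (fun t => f t ^ 2 * Real.exp (2 * K * t)) (Icc b c) := by
    refine monotoneOn_of_hasDerivWithinAt_nonneg (convex_Icc b c)
      (fun t ht => (hderiv t ht).continuousAt.continuousWithinAt)
      (fun t ht => (hderiv t (interior_subset ht)).hasDerivWithinAt) fun t ht => ?_
    have hKt : |a t| ≤ K := by simpa using hK t (interior_subset ht)
    have : 0 ≤ a t + K := by linarith [neg_abs_le (a t)]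
    positivity
  intro hc
  have hle : f b ^ 2 * Real.exp (2 * K * b) ≤ 0 := by
    simpa [hc] using hmono (left_mem_Icc.mpr hbc) (right_mem_Icc.mpr hbc) hbc
  exact hle.not_gt (by positivity)

theorem pos_of_hasDerivAt_eq_mul {f a : ℝ → ℝ} {b T : ℝ} (ha : ContinuousOn a (Ico b T))
    (hf : ∀ t ∈ Ico b T, HasDerivAt f (a t * f t) t) (hb : 0 < f b) :
    ∀ t ∈ Ico b T, 0 < f t := by
  intro t ht
  by_contra! hneg
  have hsub : Icc b t ⊆ Ico b T := Icc_subset_Ico_right ht.2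
  obtain ⟨z, hz, hfz⟩ := intermediate_value_Icc' ht.1
    (fun s hs => (hf s (hsub hs)).continuousAt.continuousWithinAt) ⟨hneg, hb.le⟩
  exact ne_zero_of_hasDerivAt_eq_mul hz.1 (ha.mono ((Icc_subset_Icc_right hz.2).trans hsub))
    (fun s hs => hf s (hsub (Icc_subset_Icc_right hz.2 hs))) hb.ne' hfz

theorem inv_le_inv_sub_of_mul_sq_le_deriv {f f' : ℝ → ℝ} {c a b : ℝ} (hab : a ≤ b)
    (hf : ∀ t ∈ Icc a b, HasDerivAt f (f' t) t) (hpos : ∀ t ∈ Icc a b, 0 < f t)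
    (hf' : ∀ t ∈ Icc a b, c * f t ^ 2 ≤ f' t) : (f b)⁻¹ ≤ (f a)⁻¹ - c * (b - a) := by
  have hderiv : ∀ t ∈ Icc a b, HasDerivAt (fun t => (f t)⁻¹ + c * t) (-f' t / f t ^ 2 + c) t :=
    fun t ht => ((hf t ht).fun_inv (hpos t ht).ne').add
      (((hasDerivAt_id t).const_mul c).congr_deriv (mul_one c))
  have hanti : AntitoneOn (fun t => (f t)⁻¹ + c * t) (Icc a b) := by
    refine antitoneOn_of_hasDerivWithinAt_nonpos (convex_Icc a b)
      (fun t ht => (hderiv t ht).continuousAt.continuousWithinAt)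
      (fun t ht => (hderiv t (interior_subset ht)).hasDerivWithinAt) fun t ht => ?_
    have ht := interior_subset ht
    have hsq : 0 < f t ^ 2 := pow_pos (hpos t ht) 2
    rw [neg_div, neg_add_nonpos_iff, le_div_iff₀ hsq]
    exact hf' t ht
  have : (f b)⁻¹ + c * b ≤ (f a)⁻¹ + c * a :=
    hanti (left_mem_Icc.mpr hab) (right_mem_Icc.mpr hab) hab
  linarith

def qDot (q G Z : ℝ) : ℝ := -(2 * G * Z * q)

noncomputable def GDot (q G Z : ℝ) : ℝ :=
  2 * G * (Z * (1 - G) - Real.sqrt (Z ^ 2 + 1) ^ 3 * q ^ 2)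

noncomputable def ZDot (q G Z : ℝ) : ℝ :=
  (3 * G - 1 - Z * q ^ 2 * Real.sqrt (Z ^ 2 + 1)) * (Z ^ 2 + 1)

/-- `R_δ` without the condition `0 < q`, as a closed set of states `(q, G, Z)`. -/
def closedRegion (δ : ℝ) : Set (ℝ × ℝ × ℝ) :=
  {p | p.1 ≤ δ ^ 3 ∧ 1/3 + δ ≤ p.2.1 ∧ p.2.2 * p.1 ≤ δ ∧ 1/δ ≤ p.2.2}

namespace EVSol

variable {q G Z : ℝ → ℝ} {s : Set ℝ} {ζ : ℝ}

lemma mono {s' : Set ℝ} (h : EVSol q G Z s) (hs : s' ⊆ s) : EVSol q G Z s' :=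
  fun ζ hζ => h ζ (hs hζ)

lemma hasDerivAt_q (h : EVSol q G Z s) (hζ : ζ ∈ s) :
    HasDerivAt q (qDot (q ζ) (G ζ) (Z ζ)) ζ :=
  (h ζ hζ).1

lemma hasDerivAt_G (h : EVSol q G Z s) (hζ : ζ ∈ s) :
    HasDerivAt G (GDot (q ζ) (G ζ) (Z ζ)) ζ :=
  (h ζ hζ).2.1

lemma hasDerivAt_Z (h : EVSol q G Z s) (hζ : ζ ∈ s) :
    HasDerivAt Z (ZDot (q ζ) (G ζ) (Z ζ)) ζ :=
  (h ζ hζ).2.2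

lemma continuousOn (h : EVSol q G Z s) :
    ContinuousOn (fun t => (q t, G t, Z t)) s := fun _ ht =>
  ((h.hasDerivAt_q ht).continuousAt.prodMk ((h.hasDerivAt_G ht).continuousAt.prodMk
    (h.hasDerivAt_Z ht).continuousAt)).continuousWithinAt

end EVSol

lemma isClosed_closedRegion (δ : ℝ) : IsClosed (closedRegion δ) :=
  (isClosed_le continuous_fst continuous_const).inter <|
    (isClosed_le continuous_const (continuous_fst.comp continuous_snd)).inter <|
    (isClosed_le ((continuous_snd.comp continuous_snd).mul continuous_fst) continuous_const).inter
    (isClosed_le continuous_const (continuous_snd.comp continuous_snd))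

section Estimates

variable {δ q G Z : ℝ}

lemma InRegion.mem_closedRegion (h : InRegion δ q G Z) : (q, G, Z) ∈ closedRegion δ :=
  ⟨h.2.1, h.2.2.1, h.2.2.2.2⟩

lemma inRegion_of_mem_closedRegion (hδ : 0 < δ) (hq : 0 < q) (h : (q, G, Z) ∈ closedRegion δ) :
    InRegion δ q G Z :=
  ⟨hq, h.1, h.2.1, mul_pos ((one_div_pos.mpr hδ).trans_le h.2.2.2) hq, h.2.2⟩

variable (hδ : 0 < δ) (hδ₀ : δ ≤ 1/10)
include hδ hδ₀

lemma ten_le_of_one_div_le (hZ : 1/δ ≤ Z) : 10 ≤ Z :=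
  le_trans (by rw [le_div_iff₀ hδ]; linarith) hZ

lemma ZDot_ge (hq : 0 ≤ q) (hG : 1/3 + δ ≤ G) (hZq : Z * q ≤ δ) (hZ : 1/δ ≤ Z) :
    δ * (Z ^ 2 + 1) ≤ ZDot q G Z := by
  have hZ10 := ten_le_of_one_div_le hδ hδ₀ hZ
  have hs : √(Z ^ 2 + 1) ≤ 2 * Z :=
    Real.sqrt_le_iff.mpr ⟨by linarith, by nlinarith⟩
  have hZq0 : 0 ≤ Z * q := by positivity
  have hcubic : Z * q ^ 2 * √(Z ^ 2 + 1) ≤ 2 * δ ^ 2 := by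
    calc Z * q ^ 2 * √(Z ^ 2 + 1) ≤ Z * q ^ 2 * (2 * Z) := by gcongr
      _ = 2 * (Z * q) ^ 2 := by ring
      _ ≤ 2 * δ ^ 2 := by gcongr
  unfold ZDot
  gcongr
  nlinarith

lemma GDot_pos (hq : 0 ≤ q) (hG : G = 1/3 + δ) (hZq : Z * q ≤ δ) (hZ : 1/δ ≤ Z) :
    0 < GDot q G Z := by
  have hZ10 := ten_le_of_one_div_le hδ hδ₀ hZ
  have hs : √(Z ^ 2 + 1) ≤ 2 * Z :=
    Real.sqrt_le_iff.mpr ⟨by linarith, by nlinarith⟩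
  have hZq0 : 0 ≤ Z * q := by positivity
  have hcubic : √(Z ^ 2 + 1) ^ 3 * q ^ 2 ≤ 8 * δ ^ 2 * Z := by
    calc √(Z ^ 2 + 1) ^ 3 * q ^ 2 ≤ (2 * Z) ^ 3 * q ^ 2 := by gcongr
      _ = 8 * (Z * q) ^ 2 * Z := by ring
      _ ≤ 8 * δ ^ 2 * Z := by gcongr
  unfold GDot
  subst hG
  have hsmall : 8 * δ ^ 2 < 1 - (1/3 + δ) := by nlinarith
  have := mul_lt_mul_of_pos_right hsmall (show 0 < Z by linarith)
  apply mul_pos (by linarith)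
  linarith

lemma ZDot_mul_add_mul_qDot_neg (hq : 0 < q) (hq3 : q ≤ δ ^ 3) (hG1 : G ≤ 1)
    (hZq : Z * q = δ) (hZ : 1/δ ≤ Z) : ZDot q G Z * q + Z * qDot q G Z < 0 := by
  have hZ10 := ten_le_of_one_div_le hδ hδ₀ hZ
  have hs : Z ≤ √(Z ^ 2 + 1) := Real.le_sqrt_of_sq_le (by linarith)
  have hexpand : ZDot q G Z * q + Z * qDot q G Z
      = (3 * G - 1) * q + (G - 1) * (Z ^ 2 * q) - Z * q ^ 3 * (√(Z ^ 2 + 1) * (Z ^ 2 + 1)) := by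
    unfold ZDot qDot; ring
  have hquartic : δ ^ 4 ≤ Z * q ^ 3 * (√(Z ^ 2 + 1) * (Z ^ 2 + 1)) * q := by
    calc δ ^ 4 = Z * q ^ 3 * Z ^ 3 * q := by rw [← hZq]; ring
      _ ≤ Z * q ^ 3 * (√(Z ^ 2 + 1) * (Z ^ 2 + 1)) * q := by gcongr; nlinarith
  have hlinear : (3 * G - 1) * q + (G - 1) * (Z ^ 2 * q) ≤ 2 * q := by
    have h1 : (3 * G - 1) * q ≤ 2 * q := by gcongr; linarith
    have h2 : (G - 1) * (Z ^ 2 * q) ≤ 0 :=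
      mul_nonpos_of_nonpos_of_nonneg (by linarith) (by positivity)
    linarith
  have hq2 : 2 * q ^ 2 < δ ^ 4 := by
    calc 2 * q ^ 2 ≤ 2 * (δ ^ 3) ^ 2 := by gcongr
      _ = (2 * δ ^ 2) * δ ^ 4 := by ring
      _ < δ ^ 4 := mul_lt_of_lt_one_left (by positivity) (by nlinarith)
  nlinarith

end Estimates

namespace EVSol

variable {δ T : ℝ} {q G Z : ℝ → ℝ} (hδ : 0 < δ) (hδ₀ : δ ≤ 1/10)
include hδ hδ₀

lemma eventually_mem_closedRegion {s : Set ℝ} {x : ℝ} (hsol : EVSol q G Z s) (hx : x ∈ s)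
    (hq : 0 < q x) (hG1 : G x ≤ 1) (hR : (q x, G x, Z x) ∈ closedRegion δ) :
    ∀ᶠ t in 𝓝[>] x, (q t, G t, Z t) ∈ closedRegion δ := by
  obtain ⟨hq3, hG, hZq, hZ⟩ := hR
  have hZ0 : 0 < Z x := by linarith [ten_le_of_one_div_le hδ hδ₀ hZ]
  have hq' := hsol.hasDerivAt_q hx
  have hG' := hsol.hasDerivAt_G hx
  have hZ' := hsol.hasDerivAt_Z hx
  have hqDot : qDot (q x) (G x) (Z x) < 0 := by
    unfold qDot
    have : 0 < 2 * G x * Z x * q x := by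
      have : 0 < G x := by linarith
      positivity
    linarith
  filter_upwards [eventually_le_of_hasDerivAt hq' hq3 fun _ => hqDot,
    eventually_ge_of_hasDerivAt hG' hG fun h => GDot_pos hδ hδ₀ hq.le h hZq hZ,
    eventually_le_of_hasDerivAt (hZ'.mul hq') hZq
      fun h => ZDot_mul_add_mul_qDot_neg hδ hδ₀ hq hq3 hG1 h hZ,
    eventually_ge_of_hasDerivAt hZ' hZ fun _ =>
      (by positivity : 0 < δ * (Z x ^ 2 + 1)).trans_le (ZDot_ge hδ hδ₀ hq.le hG hZq hZ)]
    with t h1 h2 h3 h4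
  exact ⟨h1, h2, h3, h4⟩

theorem inRegion (hsol : EVSol q G Z (Ico 0 T)) (hG1 : ∀ ζ ∈ Ico 0 T, G ζ ≤ 1)
    (h0 : InRegion δ (q 0) (G 0) (Z 0)) : ∀ ζ ∈ Ico 0 T, InRegion δ (q ζ) (G ζ) (Z ζ) := by
  have hq : ∀ t ∈ Ico 0 T, 0 < q t :=
    pos_of_hasDerivAt_eq_mul (a := fun t => -(2 * G t * Z t))
      (fun t ht => (((hsol.hasDerivAt_G ht).continuousAt.const_mul 2).mul
        (hsol.hasDerivAt_Z ht).continuousAt).neg.continuousWithinAt)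
      (fun t ht => (hsol.hasDerivAt_q ht).congr_deriv (by unfold qDot; ring)) h0.1
  intro ζ hζ
  have hsub : Icc 0 ζ ⊆ Ico 0 T := Icc_subset_Ico_right hζ.2
  have hclosed : IsClosed ({t | (q t, G t, Z t) ∈ closedRegion δ} ∩ Icc 0 ζ) := by
    rw [inter_comm]
    exact (hsol.continuousOn.mono hsub).preimage_isClosed_of_isClosed isClosed_Icc
      (isClosed_closedRegion δ)
  have hinv : Icc 0 ζ ⊆ {t | (q t, G t, Z t) ∈ closedRegion δ} :=
    hclosed.Icc_subset_of_forall_mem_nhdsWithin h0.mem_closedRegion fun t ⟨ht, htζ⟩ =>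
      have htT : t ∈ Ico 0 T := hsub (Ico_subset_Icc_self htζ)
      eventually_mem_closedRegion hδ hδ₀ hsol htT (hq t htT) (hG1 t htT) ht
  exact inRegion_of_mem_closedRegion hδ (hq ζ hζ) (hinv ⟨hζ.1, le_rfl⟩)

theorem false_of_Ici (hsol : EVSol q G Z (Ici 0)) (hG1 : ∀ ζ ∈ Ici 0, G ζ ≤ 1)
    (h0 : InRegion δ (q 0) (G 0) (Z 0)) : False := by
  have hR : ∀ t ∈ Icc (0 : ℝ) 1, InRegion δ (q t) (G t) (Z t) := fun t ht =>
    inRegion (T := 2) hδ hδ₀ (hsol.mono Ico_subset_Ici_self) (fun t ht => hG1 t ht.1) h0 t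
      ⟨ht.1, by linarith [ht.2]⟩
  have hZpos : ∀ t ∈ Icc (0 : ℝ) 1, 0 < Z t := fun t ht =>
    (one_div_pos.mpr hδ).trans_le (hR t ht).2.2.2.2.2
  have hblow := inv_le_inv_sub_of_mul_sq_le_deriv zero_le_one
    (fun t ht => hsol.hasDerivAt_Z ht.1) hZpos fun t ht => by
      obtain ⟨hq, -, hG, -, hZq, hZ⟩ := hR t ht
      nlinarith [ZDot_ge hδ hδ₀ hq.le hG hZq hZ]
  have hZ0 : (Z 0)⁻¹ ≤ δ := by
    simpa using inv_anti₀ (one_div_pos.mpr hδ) h0.2.2.2.2.2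
  have := inv_pos.mpr (hZpos 1 ⟨zero_le_one, le_rfl⟩)
  linarith

end EVSol

/-- For `δ > 0` sufficiently small, the region
`R_δ = {0 < q ≤ δ³, G ≥ 1/3 + δ, 0 < Zq ≤ δ, Z ≥ 1/δ}` is positively
invariant for the reduced system restricted to `G ≤ 1`, and every solution
starting in `R_δ` (with `G ≤ 1`) blows up (`Z → ∞`) in finite time; in
particular no such solution is global. -/
theorem stmt_17 :
    ∃ δ0 : ℝ, 0 < δ0 ∧ ∀ δ : ℝ, 0 < δ → δ ≤ δ0 →
      -- positive invariance of R_δ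
      (∀ (q G Z : ℝ → ℝ) (T : ℝ), EVSol q G Z (Set.Ico 0 T) →
        (∀ ζ ∈ Set.Ico (0:ℝ) T, G ζ ≤ 1) →
        InRegion δ (q 0) (G 0) (Z 0) →
        ∀ ζ ∈ Set.Ico (0:ℝ) T, InRegion δ (q ζ) (G ζ) (Z ζ)) ∧
      -- finite-time blow-up of Z: no global solution starting in R_δ
      (∀ q G Z : ℝ → ℝ, EVSol q G Z (Set.Ici 0) →
        (∀ ζ ∈ Set.Ici (0:ℝ), G ζ ≤ 1) →
        InRegion δ (q 0) (G 0) (Z 0) → False) :=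
  ⟨1/10, by norm_num, fun _ hδ hδ₀ =>
    ⟨fun _ _ _ _ hsol => hsol.inRegion hδ hδ₀, fun _ _ _ hsol => hsol.false_of_Ici hδ hδ₀⟩⟩
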